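/- arXiv:1612.02726 — 4 statements merged into one kernel-verified Lean document; each statement's English description precedes it below -/
import Mathlib

section
/- Let q₀ > 0 and θ₊, θ₁ ∈ ℝ with θ₊ + θ₁ ≠ 2πn for every integer n. Set θ* := (θ₊ + θ₁)/2 and define q : ℝ × ℝ → ℂ by q(x,t) := q₀·exp(i(2q₀²t + θ₊))·cosh(q₀x − iθ*)/sinh(q₀x − iθ*). Then sinh(q₀x − iθ*) ≠ 0 for all x ∈ ℝ, and q satisfies the nonlocal NLS equation with σ = −1: for all x, t ∈ ℝ, i·∂q/∂t(x,t) = ∂²q/∂x²(x,t) + 2·q(x,t)²·conj(q(−x,t)). -/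
/-!
With `z = q₀ x - i θ*` and `u = coth z`, the solution is `q = q₀ e^{i(2q₀²t + θ₊)} u`. Since
`coth' = 1 - coth²`, differentiating twice gives `q_xx = -2q₀² q (1 - u²)`. Because `θ*` is real,
`conj (z(-x)) = -z(x)`, so `q(x,t) · conj q(-x,t) = -q₀² u²`, and the nonlinear term `2q² conj q(-x)`
cancels the `u²` part of `q_xx`, leaving `-2q₀² q = i q_t`. The zeros of `sinh` are `iπℤ`, which
`q₀ x - i θ*` avoids exactly when `θ₊ + θ₁ ∉ 2πℤ`.
-/

open Complex ComplexConjugate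
open scoped Real

namespace Complex

theorem sinh_eq_zero_iff {z : ℂ} : sinh z = 0 ↔ ∃ k : ℤ, z = k * π * I := by
  rw [← mul_eq_zero_iff_right I_ne_zero, ← sin_mul_I, sin_eq_zero_iff]
  constructor
  · rintro ⟨k, hk⟩
    exact ⟨-k, by push_cast; linear_combination (-I) * hk + z * I_sq⟩
  · rintro ⟨k, rfl⟩
    exact ⟨-k, by push_cast; linear_combination (k * π) * I_sq⟩

theorem sinh_ne_zero_of_im {z : ℂ} (h : ∀ k : ℤ, z.im ≠ k * π) : sinh z ≠ 0 := by
  rw [Ne, sinh_eq_zero_iff]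
  rintro ⟨k, rfl⟩
  exact h k (by simp)

theorem hasDerivAt_cosh_div_sinh {z : ℂ} (hz : sinh z ≠ 0) :
    HasDerivAt (fun w => cosh w / sinh w) (1 - (cosh z / sinh z) ^ 2) z := by
  refine ((hasDerivAt_cosh z).div (hasDerivAt_sinh z) hz).congr_deriv ?_
  rw [div_pow, one_sub_div (pow_ne_zero 2 hz)]
  ring

theorem hasDerivAt_cosh_div_sinh_affine {a : ℝ} {c : ℂ} {y : ℝ}
    (h : sinh (a * (y : ℂ) - c) ≠ 0) :
    HasDerivAt (fun y : ℝ => cosh (a * (y : ℂ) - c) / sinh (a * (y : ℂ) - c))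
      (a * (1 - (cosh (a * (y : ℂ) - c) / sinh (a * (y : ℂ) - c)) ^ 2)) y := by
  have haff : HasDerivAt (fun w : ℂ => a * w - c) a y := by
    simpa using ((hasDerivAt_id (y : ℂ)).const_mul (a : ℂ)).sub_const c
  exact (((hasDerivAt_cosh_div_sinh h).comp (y : ℂ) haff).comp_ofReal).congr_deriv (mul_comm _ _)

end Complex

theorem deriv_deriv_const_mul_of_riccati {u : ℝ → ℂ} {a : ℂ} (K : ℂ)
    (hu : ∀ y, HasDerivAt u (a * (1 - u y ^ 2)) y) (x : ℝ) :
    deriv (deriv fun y => K * u y) x = -2 * a ^ 2 * (K * u x) * (1 - u x ^ 2) := by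
  have h1 : deriv (fun y => K * u y) = fun y => K * (a * (1 - u y ^ 2)) :=
    funext fun y => ((hu y).const_mul K).deriv
  rw [h1]
  refine ((((hu x).pow 2).const_sub 1).const_mul a |>.const_mul K).deriv.trans ?_
  ring

namespace NonlocalNLS

noncomputable def soliton (q₀ θp θs x t : ℝ) : ℂ :=
  q₀ * cexp (I * (2 * q₀ ^ 2 * t + θp)) * cosh (q₀ * x - I * θs) / sinh (q₀ * x - I * θs)

section soliton

variable (q₀ θp θs : ℝ)

theorem hasDerivAt_soliton_time (x t : ℝ) :
    HasDerivAt (soliton q₀ θp θs x) (2 * q₀ ^ 2 * I * soliton q₀ θp θs x t) t := by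
  have hphase : HasDerivAt (fun s : ℝ => I * (2 * (q₀ : ℂ) ^ 2 * s + θp)) (I * (2 * q₀ ^ 2)) t := by
    simpa using ((((hasDerivAt_id (t : ℂ)).const_mul (2 * (q₀ : ℂ) ^ 2)).add_const (θp : ℂ)).const_mul
      I).comp_ofReal
  refine (((hphase.cexp.const_mul (q₀ : ℂ)).mul_const _).div_const _).congr_deriv ?_
  unfold soliton
  ring

theorem deriv_deriv_soliton_space
    (hs : ∀ y : ℝ, sinh (q₀ * y - I * θs) ≠ 0) (x t : ℝ) :
    deriv (deriv fun y => soliton q₀ θp θs y t) x =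
      -2 * q₀ ^ 2 * soliton q₀ θp θs x t * (1 - (cosh (q₀ * x - I * θs) / sinh (q₀ * x - I * θs)) ^ 2) := by
  have hsol (y : ℝ) : soliton q₀ θp θs y t = q₀ * cexp (I * (2 * q₀ ^ 2 * t + θp)) *
      (cosh (q₀ * y - I * θs) / sinh (q₀ * y - I * θs)) :=
    mul_div_assoc _ _ _
  simp only [hsol]
  exact deriv_deriv_const_mul_of_riccati _ (fun y => hasDerivAt_cosh_div_sinh_affine (hs y)) x

theorem soliton_mul_conj_soliton_neg (x t : ℝ) :
    soliton q₀ θp θs x t * conj (soliton q₀ θp θs (-x) t) =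
      -(q₀ ^ 2 * (cosh (q₀ * x - I * θs) / sinh (q₀ * x - I * θs)) ^ 2) := by
  have harg : conj ((q₀ : ℂ) * ((-x : ℝ) : ℂ) - I * θs) = -(q₀ * x - I * θs) := by
    simp only [map_sub, map_mul, conj_ofReal, conj_I]
    push_cast
    ring
  have hphase : conj (I * (2 * (q₀ : ℂ) ^ 2 * t + θp)) = -(I * (2 * q₀ ^ 2 * t + θp)) := by
    simp only [map_mul, map_add, map_pow, map_ofNat, conj_ofReal, conj_I]
    ring
  unfold soliton
  rw [map_div₀, map_mul, map_mul, ← cosh_conj, ← sinh_conj, ← exp_conj, harg, hphase, cosh_neg,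
    sinh_neg, conj_ofReal, exp_neg]
  have := exp_ne_zero (I * (2 * (q₀ : ℂ) ^ 2 * t + θp))
  field_simp

end soliton

end NonlocalNLS

open NonlocalNLS

theorem stmt11_general (q₀ θp θ₁ : ℝ)
    (hθ : ∀ n : ℤ, θp + θ₁ ≠ 2 * Real.pi * n)
    (θs : ℝ) (hθs : θs = (θp + θ₁) / 2)
    (q : ℝ → ℝ → ℂ)
    (hq : ∀ x t : ℝ, q x t = (q₀ : ℂ) * Complex.exp (Complex.I * (2 * (q₀ : ℂ) ^ 2 * (t : ℂ) + (θp : ℂ))) *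
        Complex.cosh ((q₀ : ℂ) * (x : ℂ) - Complex.I * (θs : ℂ)) /
        Complex.sinh ((q₀ : ℂ) * (x : ℂ) - Complex.I * (θs : ℂ))) :
    (∀ x : ℝ, Complex.sinh ((q₀ : ℂ) * (x : ℂ) - Complex.I * (θs : ℂ)) ≠ 0) ∧
    ∀ x t : ℝ, Complex.I * deriv (fun s : ℝ => q x s) t =
      deriv (deriv (fun y : ℝ => q y t)) x + 2 * (q x t) ^ 2 * starRingEnd ℂ (q (-x) t) := by
  obtain rfl : q = soliton q₀ θp θs := funext₂ hq
  have hs (x : ℝ) : sinh (q₀ * x - I * θs) ≠ 0 := by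
    have him : ((q₀ : ℂ) * x - I * θs).im = -θs := by simp
    exact sinh_ne_zero_of_im fun k hk => hθ (-k) (by push_cast; linarith)
  refine ⟨hs, fun x t => ?_⟩
  rw [(hasDerivAt_soliton_time q₀ θp θs x t).deriv, deriv_deriv_soliton_space q₀ θp θs hs x t]
  linear_combination (-2 * soliton q₀ θp θs x t) * soliton_mul_conj_soliton_neg q₀ θp θs x t
    + (2 * q₀ ^ 2 * soliton q₀ θp θs x t) * I_sq

theorem stmt11 (q₀ θp θ₁ : ℝ) (hq₀ : 0 < q₀)
    (hθ : ∀ n : ℤ, θp + θ₁ ≠ 2 * Real.pi * n)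
    (θs : ℝ) (hθs : θs = (θp + θ₁) / 2)
    (q : ℝ → ℝ → ℂ)
    (hq : ∀ x t : ℝ, q x t = (q₀ : ℂ) * Complex.exp (Complex.I * (2 * (q₀ : ℂ) ^ 2 * (t : ℂ) + (θp : ℂ))) *
        Complex.cosh ((q₀ : ℂ) * (x : ℂ) - Complex.I * (θs : ℂ)) /
        Complex.sinh ((q₀ : ℂ) * (x : ℂ) - Complex.I * (θs : ℂ))) :
    (∀ x : ℝ, Complex.sinh ((q₀ : ℂ) * (x : ℂ) - Complex.I * (θs : ℂ)) ≠ 0) ∧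
    ∀ x t : ℝ, Complex.I * deriv (fun s : ℝ => q x s) t =
      deriv (deriv (fun y : ℝ => q y t)) x + 2 * (q x t) ^ 2 * starRingEnd ℂ (q (-x) t) :=
  stmt11_general q₀ θp θ₁ hθ θs hθs q hq
end

section
/- Define q : ℝ × ℝ → ℂ by q(x,t) := i·e^{8it}·N(x,t)/D(x,t), where N(x,t) := (−√3 + 3i)·cosh(4√3·t) + 2i·cosh(2√3·x) + (−3√3 + i)·sinh(4√3·t) − 2·sinh(2√3·x) and D(x,t) := 3·cosh(4√3·t) − cosh(2√3·x) + sinh(4√3·t) − i·sinh(2√3·x). Then D(x,t) ≠ 0 for all x, t ∈ ℝ, and q satisfies the nonlocal NLS equation with σ = +1: for all x, t ∈ ℝ, i·∂q/∂t(x,t) = ∂²q/∂x²(x,t) − 2·q(x,t)²·conj(q(−x,t)). -/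
/-!
Write `q = e^{8it} g / f` with `f = D` and `g = i N`. The denominator is PT-symmetric,
`conj (f (-x, t)) = f (x, t)`, and `(f, g)` solves the Hirota bilinear system
`(i D_t - D_x²) g·f = 0`, `D_x² f·f + 2 g g♯ = 8 f²` with `g♯ (x, t) = conj (g (-x, t))`; for any
such pair `e^{8it} g / f` solves the nonlocal NLS equation, the phase absorbing the constant
`8 = 2 q₀²`. Both `f` and `g` are an `x`-part plus a `t`-part, each a combination of `cosh` and
`sinh`, so the bilinear equations are polynomial identities modulo `cosh² - sinh² = 1`, `√3² = 3`
and `i² = -1`.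

`D` never vanishes: its imaginary part forces `sinh (2√3 x) = 0`, hence `x = 0`, and then its real
part is `3 cosh T + sinh T - 1 > 2 cosh T - 1 > 0` with `T = 4√3 t`.
-/

open Complex ComplexConjugate

noncomputable def partialX (F : ℝ → ℝ → ℂ) (x t : ℝ) : ℂ := deriv (F · t) x

noncomputable def partialT (F : ℝ → ℝ → ℂ) (x t : ℝ) : ℂ := deriv (F x ·) t

noncomputable def hirotaT (g f : ℝ → ℝ → ℂ) (x t : ℝ) : ℂ :=
  partialT g x t * f x t - g x t * partialT f x t

noncomputable def hirotaXX (g f : ℝ → ℝ → ℂ) (x t : ℝ) : ℂ :=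
  partialX (partialX g) x t * f x t - 2 * partialX g x t * partialX f x t
    + g x t * partialX (partialX f) x t

theorem deriv_deriv_div {u v : ℝ → ℂ} {x : ℝ} (hu : Differentiable ℝ u) (hv : Differentiable ℝ v)
    (hu' : DifferentiableAt ℝ (deriv u) x) (hv' : DifferentiableAt ℝ (deriv v) x)
    (hv0 : ∀ y, v y ≠ 0) :
    deriv (deriv fun y => u y / v y) x =
      ((deriv (deriv u) x * v x - u x * deriv (deriv v) x) * v x
        - 2 * deriv v x * (deriv u x * v x - u x * deriv v x)) / v x ^ 3 := by
  have hd : deriv (fun y => u y / v y) = fun y => (deriv u y * v y - u y * deriv v y) / v y ^ 2 :=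
    funext fun y => deriv_div (hu y) (hv y) (hv0 y)
  have hnum : HasDerivAt (fun y => deriv u y * v y - u y * deriv v y) _ x :=
    (hu'.hasDerivAt.mul (hv x).hasDerivAt).sub ((hu x).hasDerivAt.mul hv'.hasDerivAt)
  have hquot : HasDerivAt (fun y => (deriv u y * v y - u y * deriv v y) / v y ^ 2) _ x :=
    hnum.div ((hv x).hasDerivAt.pow 2) (pow_ne_zero 2 (hv0 x))
  rw [hd, hquot.deriv]
  have := hv0 x
  field_simp
  ring

theorem hasDerivAt_cexp_mul_I (ω t : ℝ) :
    HasDerivAt (fun s : ℝ => cexp (ω * I * s)) (ω * I * cexp (ω * I * t)) t := by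
  simpa [mul_comm] using (((hasDerivAt_id (t : ℂ)).const_mul (ω * I)).cexp).comp_ofReal

theorem nonlocalNLS_of_bilinear (σ : ℂ) (ω : ℝ) {f g q : ℝ → ℝ → ℂ}
    (hq : ∀ x t, q x t = cexp (ω * I * t) * g x t / f x t)
    (hg_t : ∀ x, Differentiable ℝ (g x ·)) (hf_t : ∀ x, Differentiable ℝ (f x ·))
    (hg_x : ∀ t, Differentiable ℝ (g · t)) (hf_x : ∀ t, Differentiable ℝ (f · t))
    (hg_xx : ∀ t, Differentiable ℝ (partialX g · t))
    (hf_xx : ∀ t, Differentiable ℝ (partialX f · t))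
    (hf0 : ∀ x t, f x t ≠ 0) (hf_conj : ∀ x t, conj (f (-x) t) = f x t)
    (hbil_t : ∀ x t, I * hirotaT g f x t = hirotaXX g f x t)
    (hbil_x : ∀ x t, hirotaXX f f x t + 2 * σ * g x t * conj (g (-x) t) = ω * f x t ^ 2)
    (x t : ℝ) :
    I * partialT q x t = partialX (partialX q) x t - 2 * σ * q x t ^ 2 * conj (q (-x) t) := by
  set E := cexp (ω * I * t) with hE_def
  have hE : E * conj E = 1 := by
    rw [← exp_conj, ← exp_add]
    simp [conj_ofReal]
  have h_t : partialT q x t = E * (ω * I * g x t * f x t + hirotaT g f x t) / f x t ^ 2 := by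
    have hq_t : (q x ·) = fun s : ℝ => cexp (ω * I * s) * g x s / f x s := funext (hq x)
    have hquot : HasDerivAt (fun s : ℝ => cexp (ω * I * s) * g x s / f x s) _ t :=
      ((hasDerivAt_cexp_mul_I ω t).mul (hg_t x t).hasDerivAt).div (hf_t x t).hasDerivAt (hf0 x t)
    simp only [Pi.mul_apply, ← hE_def] at hquot
    rw [partialT, hq_t, hquot.deriv, hirotaT, partialT, partialT]
    ring
  have h_xx : partialX (partialX q) x t =
      E * (hirotaXX g f x t * f x t - g x t * hirotaXX f f x t) / f x t ^ 3 := by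
    have hq_x : (q · t) = fun y => E * (g y t / f y t) :=
      funext fun y => by rw [hq, mul_div_assoc]
    show deriv (deriv (q · t)) x = _
    rw [hq_x, deriv_const_mul_field', deriv_const_mul_field']
    beta_reduce
    rw [deriv_deriv_div (hg_x t) (hf_x t) (hg_xx t x) (hf_xx t x) (hf0 · t)]
    simp only [hirotaXX, partialX]
    ring
  have h_conj : conj (q (-x) t) = conj E * conj (g (-x) t) / f x t := by
    rw [hq, map_div₀, map_mul, hf_conj]
  rw [h_t, h_xx, h_conj, show q x t = E * g x t / f x t from hq x t]
  have := hf0 x t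
  clear_value E
  field_simp
  linear_combination (E * f x t) * hbil_t x t + (E * g x t) * hbil_x x t
    + (E * f x t ^ 2 * ω * g x t) * I_sq + (2 * g x t ^ 2 * σ * conj (g (-x) t) * E) * hE

noncomputable def coshSinh (β γ : ℂ) (a y : ℝ) : ℂ :=
  β * Real.cosh (a * y) + γ * Real.sinh (a * y)

section CoshSinh

variable (β γ : ℂ) (a : ℝ)

theorem hasDerivAt_coshSinh (y : ℝ) :
    HasDerivAt (coshSinh β γ a) (coshSinh (a * γ) (a * β) a y) y := by
  have hc := (((hasDerivAt_id y).const_mul a).cosh).ofReal_comp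
  have hs := (((hasDerivAt_id y).const_mul a).sinh).ofReal_comp
  refine ((hc.const_mul β).add (hs.const_mul γ)).congr_deriv ?_
  simp only [coshSinh, id, mul_one]
  push_cast
  ring

theorem differentiable_coshSinh : Differentiable ℝ (coshSinh β γ a) :=
  fun y => (hasDerivAt_coshSinh β γ a y).differentiableAt

theorem deriv_coshSinh : deriv (coshSinh β γ a) = coshSinh (a * γ) (a * β) a :=
  funext fun y => (hasDerivAt_coshSinh β γ a y).deriv

theorem conj_coshSinh_neg (y : ℝ) :
    conj (coshSinh β γ a (-y)) = coshSinh (conj β) (-conj γ) a y := by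
  simp only [coshSinh, mul_neg, Real.cosh_neg, Real.sinh_neg, map_add, map_mul, map_neg,
    conj_ofReal, ofReal_neg]
  ring

end CoshSinh

noncomputable def sepCoshSinh (β γ : ℂ) (a : ℝ) (β' γ' : ℂ) (b : ℝ) (x t : ℝ) : ℂ :=
  coshSinh β γ a x + coshSinh β' γ' b t

section SepCoshSinh

variable (β γ : ℂ) (a : ℝ) (β' γ' : ℂ) (b : ℝ)

theorem partialX_sepCoshSinh :
    partialX (sepCoshSinh β γ a β' γ' b) = sepCoshSinh (a * γ) (a * β) a 0 0 b := by
  funext x t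
  simp only [partialX, sepCoshSinh, deriv_add_const, deriv_coshSinh]
  simp [coshSinh]

theorem partialT_sepCoshSinh :
    partialT (sepCoshSinh β γ a β' γ' b) = sepCoshSinh 0 0 a (b * γ') (b * β') b := by
  funext x t
  simp only [partialT, sepCoshSinh, deriv_const_add, deriv_coshSinh]
  simp [coshSinh]

theorem differentiable_sepCoshSinh_x (t : ℝ) :
    Differentiable ℝ (sepCoshSinh β γ a β' γ' b · t) :=
  (differentiable_coshSinh β γ a).add_const _

theorem differentiable_partialX_sepCoshSinh (t : ℝ) :
    Differentiable ℝ (partialX (sepCoshSinh β γ a β' γ' b) · t) := by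
  rw [partialX_sepCoshSinh]
  exact differentiable_sepCoshSinh_x _ _ _ _ _ _ t

theorem differentiable_sepCoshSinh_t (x : ℝ) :
    Differentiable ℝ (sepCoshSinh β γ a β' γ' b x ·) :=
  (differentiable_coshSinh β' γ' b).const_add _

theorem conj_sepCoshSinh_neg (x t : ℝ) :
    conj (sepCoshSinh β γ a β' γ' b (-x) t) =
      sepCoshSinh (conj β) (-conj γ) a (conj β') (conj γ') b x t := by
  simp only [sepCoshSinh, map_add, conj_coshSinh_neg]
  simp only [coshSinh, map_add, map_mul, conj_ofReal]

end SepCoshSinh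

-- `D` and `i N` of the theorem.
noncomputable def twoSolitonDen : ℝ → ℝ → ℂ := sepCoshSinh (-1) (-I) (2 * √3) 3 1 (4 * √3)

noncomputable def twoSolitonNum : ℝ → ℝ → ℂ :=
  sepCoshSinh (-2) (-2 * I) (2 * √3) (-3 - √3 * I) (-1 - 3 * √3 * I) (4 * √3)

theorem one_lt_three_mul_cosh_add_sinh (r : ℝ) : 1 < 3 * Real.cosh r + Real.sinh r := by
  have h := Real.sinh_lt_cosh (-r)
  rw [Real.sinh_neg, Real.cosh_neg] at h
  linarith [Real.one_le_cosh r]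

theorem twoSolitonDen_ne_zero (x t : ℝ) : twoSolitonDen x t ≠ 0 := by
  have hsplit : twoSolitonDen x t = ((3 * Real.cosh (4 * √3 * t) + Real.sinh (4 * √3 * t)
      - Real.cosh (2 * √3 * x) : ℝ) : ℂ) - I * (Real.sinh (2 * √3 * x) : ℝ) := by
    simp only [twoSolitonDen, sepCoshSinh, coshSinh]
    push_cast
    ring
  rw [hsplit]
  intro h
  have him := congrArg im h
  have hre := congrArg re h
  simp only [sub_re, sub_im, mul_re, mul_im, ofReal_re, ofReal_im, I_re, I_im, zero_re, zero_im,
    zero_mul, one_mul, sub_zero, zero_sub, neg_eq_zero, zero_add, Real.sinh_eq_zero] at him hre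
  rw [him, Real.cosh_zero] at hre
  linarith [one_lt_three_mul_cosh_add_sinh (4 * √3 * t)]

theorem conj_twoSolitonDen_neg (x t : ℝ) : conj (twoSolitonDen (-x) t) = twoSolitonDen x t := by
  simp [twoSolitonDen, conj_sepCoshSinh_neg, map_ofNat]

theorem ofReal_sqrt_three_sq : (√3 : ℂ) ^ 2 = 3 := by
  exact_mod_cast Real.sq_sqrt (by norm_num : (0 : ℝ) ≤ 3)

theorem twoSoliton_bilinear_t (x t : ℝ) :
    I * hirotaT twoSolitonNum twoSolitonDen x t = hirotaXX twoSolitonNum twoSolitonDen x t := by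
  simp only [hirotaT, hirotaXX, twoSolitonNum, twoSolitonDen, partialX_sepCoshSinh,
    partialT_sepCoshSinh, sepCoshSinh, coshSinh]
  push_cast
  have hx := cosh_sq_sub_sinh_sq (2 * √3 * x : ℂ)
  have ht := cosh_sq_sub_sinh_sq (4 * √3 * t : ℂ)
  grind [ofReal_sqrt_three_sq, I_sq]

theorem twoSoliton_bilinear_x (x t : ℝ) :
    hirotaXX twoSolitonDen twoSolitonDen x t + 2 * twoSolitonNum x t * conj (twoSolitonNum (-x) t)
      = 8 * twoSolitonDen x t ^ 2 := by
  simp only [hirotaXX, twoSolitonNum, twoSolitonDen, partialX_sepCoshSinh, conj_sepCoshSinh_neg]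
  simp only [sepCoshSinh, coshSinh, map_sub, map_neg, map_mul, map_one, map_ofNat, conj_I,
    conj_ofReal]
  push_cast
  have hx := cosh_sq_sub_sinh_sq (2 * √3 * x : ℂ)
  have ht := cosh_sq_sub_sinh_sq (4 * √3 * t : ℂ)
  grind [ofReal_sqrt_three_sq, I_sq]

theorem stmt12 (N D q : ℝ → ℝ → ℂ)
    (hN : ∀ x t : ℝ, N x t =
        (-(Real.sqrt 3 : ℂ) + 3 * Complex.I) * (Real.cosh (4 * Real.sqrt 3 * t) : ℂ)
        + 2 * Complex.I * (Real.cosh (2 * Real.sqrt 3 * x) : ℂ)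
        + (-3 * (Real.sqrt 3 : ℂ) + Complex.I) * (Real.sinh (4 * Real.sqrt 3 * t) : ℂ)
        - 2 * (Real.sinh (2 * Real.sqrt 3 * x) : ℂ))
    (hD : ∀ x t : ℝ, D x t =
        3 * (Real.cosh (4 * Real.sqrt 3 * t) : ℂ) - (Real.cosh (2 * Real.sqrt 3 * x) : ℂ)
        + (Real.sinh (4 * Real.sqrt 3 * t) : ℂ) - Complex.I * (Real.sinh (2 * Real.sqrt 3 * x) : ℂ))
    (hq : ∀ x t : ℝ, q x t = Complex.I * Complex.exp (8 * Complex.I * (t : ℂ)) * N x t / D x t) :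
    (∀ x t : ℝ, D x t ≠ 0) ∧
    ∀ x t : ℝ, Complex.I * deriv (fun s : ℝ => q x s) t =
      deriv (deriv (fun y : ℝ => q y t)) x - 2 * (q x t) ^ 2 * starRingEnd ℂ (q (-x) t) := by
  obtain rfl : D = twoSolitonDen := by
    funext x t
    rw [hD]
    simp only [twoSolitonDen, sepCoshSinh, coshSinh]
    ring
  have hNum : ∀ x t, I * N x t = twoSolitonNum x t := by
    intro x t
    rw [hN]
    simp only [twoSolitonNum, sepCoshSinh, coshSinh]
    linear_combination (3 * (Real.cosh (4 * √3 * t) : ℂ) + 2 * (Real.cosh (2 * √3 * x) : ℂ)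
      + (Real.sinh (4 * √3 * t) : ℂ)) * I_sq
  have hq' : ∀ x t, q x t = cexp ((8 : ℝ) * I * t) * twoSolitonNum x t / twoSolitonDen x t := by
    intro x t
    rw [hq, ← hNum]
    push_cast
    ring
  refine ⟨twoSolitonDen_ne_zero, fun x t => ?_⟩
  have h := nonlocalNLS_of_bilinear 1 8 hq'
    (differentiable_sepCoshSinh_t _ _ _ _ _ _) (differentiable_sepCoshSinh_t _ _ _ _ _ _)
    (differentiable_sepCoshSinh_x _ _ _ _ _ _) (differentiable_sepCoshSinh_x _ _ _ _ _ _)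
    (differentiable_partialX_sepCoshSinh _ _ _ _ _ _)
    (differentiable_partialX_sepCoshSinh _ _ _ _ _ _)
    twoSolitonDen_ne_zero conj_twoSolitonDen_neg twoSoliton_bilinear_t
    (fun x t => by simpa using twoSoliton_bilinear_x x t) x t
  rwa [mul_one] at h
end

section
/- Let A ∈ ℂ with A ≠ 0 and let k ∈ ℝ with 0 < |k| < 2|A|. Set ν := |k|·√(4|A|² − k²), which is a positive real number. Then there exists c ∈ ℂ with c ≠ 0 such that the function q̃(x,t) := c·exp(i·k·x + ν·t) satisfies, for all x, t ∈ ℝ, i·∂q̃/∂t(x,t) = ∂²q̃/∂x²(x,t) + 2|A|²·q̃(x,t) + 2A²·conj(q̃(−x,t)). In particular the linearized equation admits a solution growing exponentially in time. -/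
/-!
For the plane wave `c e^{ikx + νt}` the time derivative contributes `iν`, the second space derivative
`-k²`, and the reflected conjugate `conj c · e^{ikx + νt}`, so the equation reduces to the scalar identity
`2A² · conj c = (k² - 2|A|² + iν) c`. The choice of `ν` makes both coefficients have modulus `2|A|²`,
and `z · conj c = w · c` has a nonzero solution whenever `‖z‖ = ‖w‖`.
-/

open Complex ComplexConjugate

lemma exists_ne_zero_mul_conj_eq_mul {z w : ℂ} (h : ‖z‖ = ‖w‖) :
    ∃ c : ℂ, c ≠ 0 ∧ z * conj c = w * c := by
  have hsq : z * conj z = w * conj w := by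
    rw [mul_conj, mul_conj, normSq_eq_norm_sq, normSq_eq_norm_sq, h]
  by_cases hz : z = 0
  · exact ⟨1, one_ne_zero, by simp_all⟩
  -- `z + conj w` and `I (z - conj w)` both solve the equation, and they cannot both vanish.
  by_cases hsum : z + conj w = 0
  · refine ⟨I * (z - conj w), ?_, ?_⟩
    · have : z - conj w = 2 * z := by linear_combination -hsum
      simp [this, hz]
    · simp only [map_mul, map_sub, conj_I, conj_conj]
      linear_combination -I * hsq
  · exact ⟨z + conj w, hsum, by simp only [map_add, conj_conj]; linear_combination hsq⟩

lemma deriv_const_mul_cexp_mul_add (c a b : ℂ) :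
    deriv (fun y : ℝ => c * exp (a * y + b)) = fun y : ℝ => a * (c * exp (a * y + b)) := by
  funext y
  have hlin : HasDerivAt (fun y : ℝ => a * y + b) a y := by
    simpa using ((ofRealCLM.hasDerivAt (x := y)).const_mul a).add_const b
  rw [(hlin.cexp.const_mul c).deriv]
  ring

lemma deriv_const_mul_cexp_add_mul (c a b : ℂ) :
    deriv (fun y : ℝ => c * exp (b + a * y)) = fun y : ℝ => a * (c * exp (b + a * y)) := by
  simp only [add_comm b]
  exact deriv_const_mul_cexp_mul_add c a b

lemma deriv_deriv_const_mul_cexp_mul_add (c a b : ℂ) :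
    deriv (deriv fun y : ℝ => c * exp (a * y + b)) = fun y : ℝ => a ^ 2 * (c * exp (a * y + b)) := by
  simp only [deriv_const_mul_cexp_mul_add, ← mul_assoc]
  funext y
  ring

lemma conj_cexp_I_mul_neg_add (k x ν t : ℝ) :
    conj (exp (I * k * ((-x : ℝ) : ℂ) + ν * t)) = exp (I * k * x + ν * t) := by
  rw [← exp_conj]
  congr 1
  simp only [map_add, map_mul, map_neg, conj_I, conj_ofReal, ofReal_neg]
  ring

lemma norm_sq_sub_add_mul_I {a k ν : ℝ} (hν : ν ^ 2 = k ^ 2 * (4 * a ^ 2 - k ^ 2)) :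
    ‖((k ^ 2 - 2 * a ^ 2 : ℝ) : ℂ) + ν * I‖ = 2 * a ^ 2 := by
  rw [norm_add_mul_I]
  have : (k ^ 2 - 2 * a ^ 2) ^ 2 + ν ^ 2 = (2 * a ^ 2) ^ 2 := by rw [hν]; ring
  rw [this, Real.sqrt_sq (by positivity)]

theorem stmt13_general (A : ℂ) (k : ℝ) (hk0 : 0 < |k|) (hk2 : |k| < 2 * ‖A‖)
    (ν : ℝ) (hν : ν = |k| * Real.sqrt (4 * ‖A‖ ^ 2 - k ^ 2)) :
    0 < ν ∧
    ∃ c : ℂ, c ≠ 0 ∧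
      ∀ x t : ℝ,
        Complex.I * deriv (fun s : ℝ =>
            c * Complex.exp (Complex.I * (k : ℂ) * (x : ℂ) + (ν : ℂ) * (s : ℂ))) t =
          deriv (deriv (fun y : ℝ =>
            c * Complex.exp (Complex.I * (k : ℂ) * (y : ℂ) + (ν : ℂ) * (t : ℂ)))) x
          + 2 * (‖A‖ : ℂ) ^ 2 *
              (c * Complex.exp (Complex.I * (k : ℂ) * (x : ℂ) + (ν : ℂ) * (t : ℂ)))
          + 2 * A ^ 2 * starRingEnd ℂ
              (c * Complex.exp (Complex.I * (k : ℂ) * ((-x : ℝ) : ℂ) + (ν : ℂ) * (t : ℂ))) := by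
  have hk_sq : k ^ 2 < 4 * ‖A‖ ^ 2 := by
    rw [← sq_abs k]
    nlinarith [abs_nonneg k]
  have hν_sq : ν ^ 2 = k ^ 2 * (4 * ‖A‖ ^ 2 - k ^ 2) := by
    rw [hν, mul_pow, sq_abs, Real.sq_sqrt (by linarith)]
  refine ⟨hν ▸ mul_pos hk0 (Real.sqrt_pos.mpr (by linarith)), ?_⟩
  have hnorm : ‖(2 * A ^ 2 : ℂ)‖ = ‖((k ^ 2 - 2 * ‖A‖ ^ 2 : ℝ) : ℂ) + ν * I‖ := by
    rw [norm_sq_sub_add_mul_I hν_sq, norm_mul, norm_pow, Complex.norm_two]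
  obtain ⟨c, hc0, hc⟩ := exists_ne_zero_mul_conj_eq_mul hnorm
  refine ⟨c, hc0, fun x t => ?_⟩
  rw [deriv_const_mul_cexp_add_mul, deriv_deriv_const_mul_cexp_mul_add, map_mul,
    conj_cexp_I_mul_neg_add]
  push_cast at hc
  linear_combination -exp (I * k * x + ν * t) * hc - k ^ 2 * c * exp (I * k * x + ν * t) * I_mul_I

theorem stmt13 (A : ℂ) (hA : A ≠ 0) (k : ℝ) (hk0 : 0 < |k|) (hk2 : |k| < 2 * ‖A‖)
    (ν : ℝ) (hν : ν = |k| * Real.sqrt (4 * ‖A‖ ^ 2 - k ^ 2)) :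
    0 < ν ∧
    ∃ c : ℂ, c ≠ 0 ∧
      ∀ x t : ℝ,
        Complex.I * deriv (fun s : ℝ =>
            c * Complex.exp (Complex.I * (k : ℂ) * (x : ℂ) + (ν : ℂ) * (s : ℂ))) t =
          deriv (deriv (fun y : ℝ =>
            c * Complex.exp (Complex.I * (k : ℂ) * (y : ℂ) + (ν : ℂ) * (t : ℂ)))) x
          + 2 * (‖A‖ : ℂ) ^ 2 *
              (c * Complex.exp (Complex.I * (k : ℂ) * (x : ℂ) + (ν : ℂ) * (t : ℂ)))
          + 2 * A ^ 2 * starRingEnd ℂ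
              (c * Complex.exp (Complex.I * (k : ℂ) * ((-x : ℝ) : ℂ) + (ν : ℂ) * (t : ℂ))) :=
  stmt13_general A k hk0 hk2 ν hν
end

section
/- Let σ ∈ ℝ with σ = 1 or σ = −1, let A ∈ ℂ, k ∈ ℝ, and λ ∈ ℂ with λ + conj(λ) ≠ 0, and let q₁, q₂ ∈ ℂ with (q₁, q₂) ≠ (0, 0). Define q̃(x,t) := q₁·exp(i·k·x + i·λ·t) + q₂·exp(i·k·x − i·conj(λ)·t). If q̃ satisfies, for all x, t ∈ ℝ, i·∂q̃/∂t(x,t) = ∂²q̃/∂x²(x,t) − 2σ|A|²·q̃(x,t) − 2σA²·conj(q̃(−x,t)), then λ² = k²·(k² + 4σ|A|²). -/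
/-!
Reflecting `x ↦ -x` and conjugating swaps the two modes `e^{iλt}` and `e^{-i conj(λ) t}`, so at
`x = 0` the equation says that a combination of these two exponentials vanishes identically.
Their rates differ because `λ + conj λ ≠ 0`, so both coefficients vanish; after conjugating the
second, they form a 2×2 linear system with the nonzero solution `(q₁, conj q₂)`. Its determinant
`(k² + 2σ|A|²)² - λ² - 4σ²|A|⁴` therefore vanishes, which is the dispersion relation.
-/

open Complex ComplexConjugate

lemma hasDerivAt_cexp_mul_ofReal (c : ℂ) (s : ℝ) :
    HasDerivAt (fun u : ℝ => cexp (c * u)) (c * cexp (c * s)) s := by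
  simpa [mul_comm] using ((hasDerivAt_id (s : ℂ)).const_mul c).cexp.comp_ofReal

lemma deriv_deriv_cexp_mul_ofReal_mul (c w : ℂ) (x : ℝ) :
    deriv (deriv fun y : ℝ => cexp (c * y) * w) x = c ^ 2 * cexp (c * x) * w := by
  have hfirst : deriv (fun y : ℝ => cexp (c * y) * w) = fun y : ℝ => c * (cexp (c * y) * w) :=
    funext fun y => ((hasDerivAt_cexp_mul_ofReal c y).mul_const w).deriv.trans (by ring)
  rw [hfirst, (((hasDerivAt_cexp_mul_ofReal c x).mul_const w).const_mul c).deriv]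
  ring

lemma eq_zero_of_forall_mul_cexp_add_mul_cexp_eq_zero {α β a b : ℂ} (hαβ : α ≠ β)
    (h : ∀ t : ℝ, a * cexp (α * t) + b * cexp (β * t) = 0) : a = 0 ∧ b = 0 := by
  have hderiv : HasDerivAt (fun t : ℝ => a * cexp (α * t) + b * cexp (β * t))
      (a * α + b * β) 0 := by
    simpa using ((hasDerivAt_cexp_mul_ofReal α 0).const_mul a).fun_add
      ((hasDerivAt_cexp_mul_ofReal β 0).const_mul b)
  have hslope : a * α + b * β = 0 := by
    rw [funext h] at hderiv
    exact hderiv.unique (hasDerivAt_const 0 0)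
  have hsum : a + b = 0 := by simpa using h 0
  have ha : a = 0 := by
    have hmul : (α - β) * a = 0 := by linear_combination hslope - β * hsum
    exact (mul_eq_zero.mp hmul).resolve_left (sub_ne_zero.mpr hαβ)
  exact ⟨ha, by linear_combination hsum - ha⟩

lemma det_eq_zero_of_mul_add_mul_eq_zero {R : Type*} [CommRing R] [NoZeroDivisors R]
    {a b c d u v : R} (h₁ : a * u + b * v = 0) (h₂ : c * u + d * v = 0)
    (huv : ¬(u = 0 ∧ v = 0)) : a * d - b * c = 0 := by
  by_contra hdet
  refine huv ⟨?_, ?_⟩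
  · have hmul : (a * d - b * c) * u = 0 := by linear_combination d * h₁ - b * h₂
    exact (mul_eq_zero.mp hmul).resolve_left hdet
  · have hmul : (a * d - b * c) * v = 0 := by linear_combination a * h₂ - c * h₁
    exact (mul_eq_zero.mp hmul).resolve_left hdet

lemma linearized_nls_mode_equation (σ : ℝ) (A : ℂ) (k : ℝ) (lam q1 q2 : ℂ) (qt : ℝ → ℝ → ℂ)
    (hqt : ∀ x t : ℝ, qt x t =
        q1 * cexp (I * k * x + I * lam * t) + q2 * cexp (I * k * x - I * conj lam * t))
    (hpde : ∀ x t : ℝ, I * deriv (fun s : ℝ => qt x s) t =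
        deriv (deriv (fun y : ℝ => qt y t)) x
        - 2 * σ * (‖A‖ : ℂ) ^ 2 * qt x t - 2 * σ * A ^ 2 * conj (qt (-x) t)) (t : ℝ) :
    ((k ^ 2 + 2 * σ * (‖A‖ : ℂ) ^ 2 - lam) * q1 + 2 * σ * A ^ 2 * conj q2) * cexp (I * lam * t)
      + ((k ^ 2 + 2 * σ * (‖A‖ : ℂ) ^ 2 + conj lam) * q2 + 2 * σ * A ^ 2 * conj q1)
        * cexp (-(I * conj lam) * t) = 0 := by
  have hspace : ∀ y t : ℝ, qt y t = cexp (I * k * y) * qt 0 t := by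
    intro y t
    simp only [hqt, ofReal_zero, mul_zero, zero_add, sub_eq_add_neg, exp_add]
    ring
  have hwave : ∀ t : ℝ, qt 0 t = q1 * cexp (I * lam * t) + q2 * cexp (-(I * conj lam) * t) := by
    intro t
    simp only [hqt, ofReal_zero, mul_zero, zero_add, zero_sub, neg_mul]
  have htime : ∀ t : ℝ, deriv (fun s : ℝ => qt 0 s) t
      = q1 * (I * lam * cexp (I * lam * t))
        + q2 * (-(I * conj lam) * cexp (-(I * conj lam) * t)) := by
    intro t
    rw [funext hwave]
    exact (((hasDerivAt_cexp_mul_ofReal _ t).const_mul q1).add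
      ((hasDerivAt_cexp_mul_ofReal _ t).const_mul q2)).deriv
  have hconj : ∀ t : ℝ, conj (qt 0 t)
      = conj q2 * cexp (I * lam * t) + conj q1 * cexp (-(I * conj lam) * t) := by
    intro t
    simp only [hwave, map_add, map_mul, ← exp_conj, map_neg, conj_I, conj_ofReal, conj_conj]
    ring_nf
  have h := hpde 0 t
  rw [htime, funext fun y => hspace y t, deriv_deriv_cexp_mul_ofReal_mul, neg_zero, hconj,
    hwave, ofReal_zero, mul_zero, exp_zero] at h
  linear_combination h - (lam * q1 * cexp (I * lam * t)
    - conj lam * q2 * cexp (-(I * conj lam) * t)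
    - k ^ 2 * (q1 * cexp (I * lam * t) + q2 * cexp (-(I * conj lam) * t))) * I_sq

theorem stmt14_general (σ : ℝ) (A : ℂ) (k : ℝ) (lam : ℂ)
    (hlam : lam + starRingEnd ℂ lam ≠ 0) (q1 q2 : ℂ) (hq12 : ¬(q1 = 0 ∧ q2 = 0))
    (qt : ℝ → ℝ → ℂ)
    (hqt : ∀ x t : ℝ, qt x t =
        q1 * Complex.exp (Complex.I * (k : ℂ) * (x : ℂ) + Complex.I * lam * (t : ℂ))
        + q2 * Complex.exp (Complex.I * (k : ℂ) * (x : ℂ) - Complex.I * starRingEnd ℂ lam * (t : ℂ)))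
    (hpde : ∀ x t : ℝ, Complex.I * deriv (fun s : ℝ => qt x s) t =
        deriv (deriv (fun y : ℝ => qt y t)) x
        - 2 * (σ : ℂ) * (‖A‖ : ℂ) ^ 2 * qt x t
        - 2 * (σ : ℂ) * A ^ 2 * starRingEnd ℂ (qt (-x) t)) :
    lam ^ 2 = (k : ℂ) ^ 2 * ((k : ℂ) ^ 2 + 4 * (σ : ℂ) * (‖A‖ : ℂ) ^ 2) := by
  have hcoef := linearized_nls_mode_equation σ A k lam q1 q2 qt hqt hpde
  have hrates : I * lam ≠ -(I * conj lam) := fun h =>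
    hlam (mul_left_cancel₀ I_ne_zero (by linear_combination h))
  obtain ⟨h₁, h₂⟩ := eq_zero_of_forall_mul_cexp_add_mul_cexp_eq_zero hrates hcoef
  have h₂' : (2 * σ * conj A ^ 2) * q1 + (k ^ 2 + 2 * σ * (‖A‖ : ℂ) ^ 2 + lam) * conj q2 = 0 := by
    have h := congrArg conj h₂
    simp only [map_add, map_mul, map_pow, map_ofNat, conj_ofReal, conj_conj, map_zero] at h
    linear_combination h
  have hdet := det_eq_zero_of_mul_add_mul_eq_zero h₁ h₂' (by simpa using hq12)
  linear_combination -hdet - 4 * σ ^ 2 * (A * conj A + (‖A‖ : ℂ) ^ 2) * mul_conj' A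

theorem stmt14 (σ : ℝ) (hσ : σ = 1 ∨ σ = -1) (A : ℂ) (k : ℝ) (lam : ℂ)
    (hlam : lam + starRingEnd ℂ lam ≠ 0) (q1 q2 : ℂ) (hq12 : ¬(q1 = 0 ∧ q2 = 0))
    (qt : ℝ → ℝ → ℂ)
    (hqt : ∀ x t : ℝ, qt x t =
        q1 * Complex.exp (Complex.I * (k : ℂ) * (x : ℂ) + Complex.I * lam * (t : ℂ))
        + q2 * Complex.exp (Complex.I * (k : ℂ) * (x : ℂ) - Complex.I * starRingEnd ℂ lam * (t : ℂ)))
    (hpde : ∀ x t : ℝ, Complex.I * deriv (fun s : ℝ => qt x s) t =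
        deriv (deriv (fun y : ℝ => qt y t)) x
        - 2 * (σ : ℂ) * (‖A‖ : ℂ) ^ 2 * qt x t
        - 2 * (σ : ℂ) * A ^ 2 * starRingEnd ℂ (qt (-x) t)) :
    lam ^ 2 = (k : ℂ) ^ 2 * ((k : ℂ) ^ 2 + 4 * (σ : ℂ) * (‖A‖ : ℂ) ^ 2) :=
  stmt14_general σ A k lam hlam q1 q2 hq12 qt hqt hpde
end
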